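/- Let L be a relational language, G a directed graph, and (M, α, β, A, B, P) an L-system. Then the L-structure G ⋆ M is directed. -/

import Mathlib

universe u

open CategoryTheory

/-! ### Relational languages and structures -/

/-- A relational language: a type of relation symbols together with their arities. -/
structure RelLang : Type (u + 1) where
  Symb : Type u
  ar : Symb → ℕ

/-- A structure for a relational language `L`: a carrier set together with an
interpretation of every relation symbol. -/
structure RelStr (L : RelLang.{u}) : Type (u + 1) where
  carrier : Type u
  rel : ∀ R : L.Symb, Set (((Fin (L.ar R))) → carrier)

/-- `f` is a homomorphism of `L`-structures: it maps every tuple in a relation of `M`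
to a tuple in the corresponding relation of `N`. -/
def IsRelHom {L : RelLang.{u}} (M N : RelStr L) (f : M.carrier → N.carrier) : Prop :=
  ∀ (R : L.Symb) (t : Fin (L.ar R) → M.carrier), t ∈ M.rel R → (f ∘ t) ∈ N.rel R

/-- `f` is a strong homomorphism. -/
def IsStrongRelHom {L : RelLang.{u}} (M N : RelStr L) (f : M.carrier → N.carrier) : Prop :=
  ∀ (R : L.Symb) (t : Fin (L.ar R) → M.carrier), t ∈ M.rel R ↔ (f ∘ t) ∈ N.rel R

/-- The category `Str(L)` of all `L`-structures with homomorphisms. -/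
instance strCategory {L : RelLang.{u}} : Category (RelStr L) where
  Hom M N := {f : M.carrier → N.carrier // IsRelHom M N f}
  id M := ⟨id, fun _ _ ht => ht⟩
  comp f g := ⟨g.1 ∘ f.1, fun R t ht => g.2 R (f.1 ∘ t) (f.2 R t ht)⟩
  id_comp f := Subtype.ext rfl
  comp_id f := Subtype.ext rfl
  assoc f g h := Subtype.ext rfl

/-- An isolated point: one occurring in no tuple of any relation. -/
def NoIsolatedStr {L : RelLang.{u}} (M : RelStr L) : Prop :=
  ∀ x : M.carrier, ∃ (R : L.Symb) (t : Fin (L.ar R) → M.carrier),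
    t ∈ M.rel R ∧ x ∈ Set.range t

/-! ### Gaifman graphs and subdivided cliques -/

/-- The Gaifman graph of an `L`-structure: distinct `x`, `y` are adjacent whenever some
tuple in some relation contains both. -/
def gaifman {L : RelLang.{u}} (M : RelStr L) : SimpleGraph M.carrier where
  Adj x y := x ≠ y ∧ ∃ (R : L.Symb) (t : Fin (L.ar R) → M.carrier),
    t ∈ M.rel R ∧ x ∈ Set.range t ∧ y ∈ Set.range t
  symm := ⟨by
    rintro x y ⟨hxy, R, t, ht, hx, hy⟩
    exact ⟨Ne.symm hxy, R, t, ht, hy, hx⟩⟩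
  loopless := ⟨fun x h => h.1 rfl⟩

/-- Vertex set of the `r`-subdivision of the complete graph on a linearly ordered
vertex type `V`: native vertices plus `r` subdivision points for each pair `u < v`. -/
def KsubVert (V : Type u) [LT V] (r : ℕ) : Type u :=
  V ⊕ ({p : V × V // p.1 < p.2} × Fin r)

/-- One direction of the adjacency of the subdivided clique. -/
def ksubBase (V : Type u) [LT V] (r : ℕ) : KsubVert V r → KsubVert V r → Prop
  | Sum.inl x, Sum.inl y => r = 0 ∧ x < y
  | Sum.inl x, Sum.inr (e, i) =>
      (x = e.1.1 ∧ (i : ℕ) = 0) ∨ (x = e.1.2 ∧ (i : ℕ) = r - 1)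
  | Sum.inr (e, i), Sum.inr (e', j) => e = e' ∧ (j : ℕ) = (i : ℕ) + 1
  | Sum.inr _, Sum.inl _ => False

/-- The `r`-subdivision `K_V^r` of the complete graph on `V`: every edge of the complete
graph is replaced by a path of length `r + 1`. -/
def Ksub (V : Type u) [LT V] (r : ℕ) : SimpleGraph (KsubVert V r) where
  Adj x y := x ≠ y ∧ (ksubBase V r x y ∨ ksubBase V r y x)
  symm := ⟨by rintro x y ⟨h, h'⟩; exact ⟨Ne.symm h, h'.symm⟩⟩
  loopless := ⟨fun x h => h.1 rfl⟩

/-- `G` contains the `r`-subdivided complete graph on `lam` vertices as a (not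
necessarily induced) subgraph. -/
def HasKsub {α : Type u} (G : SimpleGraph α) (lam : Cardinal.{u}) (r : ℕ) : Prop :=
  ∃ f : Ksub lam.ord.ToType r →g G, Function.Injective f

/-- A class of `L`-structures has `κ`-somewhere dense Gaifman class. -/
def GaifKSomewhereDense {L : RelLang.{u}} (S : Set (RelStr L)) (κ : Cardinal.{u}) : Prop :=
  ∃ r : ℕ, ∀ lam : Cardinal.{u}, lam < κ → ∃ M ∈ S, HasKsub (gaifman M) lam r

/-- A class of `L`-structures has totally somewhere dense Gaifman class:
it is `κ`-somewhere dense for every cardinal `κ`. -/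
def GaifTotallySomewhereDense {L : RelLang.{u}} (S : Set (RelStr L)) : Prop :=
  ∀ κ : Cardinal.{u}, GaifKSomewhereDense S κ

/-! ### Universal algebras and algebraic universality -/

/-- A similarity type: a type of function symbols together with their arities. -/
structure SimTy : Type (u + 1) where
  Symb : Type u
  ar : Symb → ℕ

/-- A universal algebra of similarity type `Δ`. -/
structure Alg (Δ : SimTy.{u}) : Type (u + 1) where
  carrier : Type u
  op : ∀ f : Δ.Symb, (Fin (Δ.ar f) → carrier) → carrier

/-- Homomorphisms of universal algebras. -/
def IsAlgHom {Δ : SimTy.{u}} (A B : Alg Δ) (χ : A.carrier → B.carrier) : Prop :=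
  ∀ (f : Δ.Symb) (t : Fin (Δ.ar f) → A.carrier), χ (A.op f t) = B.op f (χ ∘ t)

/-- The category `Alg(Δ)` of all `Δ`-algebras with homomorphisms. -/
instance algCategory {Δ : SimTy.{u}} : Category (Alg Δ) where
  Hom A B := {χ : A.carrier → B.carrier // IsAlgHom A B χ}
  id A := ⟨id, fun _ _ => rfl⟩
  comp {A B C} f g := ⟨g.1 ∘ f.1, fun s t => by
    show g.1 (f.1 (A.op s t)) = C.op s (g.1 ∘ f.1 ∘ t)
    rw [f.2 s t, g.2 s (f.1 ∘ t)]⟩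
  id_comp f := Subtype.ext rfl
  comp_id f := Subtype.ext rfl
  assoc f g h := Subtype.ext rfl

/-- A category is algebraically universal if every category of universal algebras
fully embeds into it. -/
def AlgUniversalCat (C : Type (u + 1)) [Category.{u} C] : Prop :=
  ∀ Δ : SimTy.{u}, ∃ F : Alg Δ ⥤ C, F.Full ∧ F.Faithful

/-- A category (equipped with a notion of size of objects) is `κ`-algebraically
universal if for every similarity type `Δ` the category of `Δ`-algebras of size `< κ`
fully embeds into the full subcategory of objects of size `< κ`. -/
def KUniversalCat (C : Type (u + 1)) [Category.{u} C] (size : C → Cardinal.{u})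
    (κ : Cardinal.{u}) : Prop :=
  ∀ Δ : SimTy.{u}, ∃ F : ObjectProperty.FullSubcategory (fun A : Alg Δ => Cardinal.mk A.carrier < κ) ⥤
    ObjectProperty.FullSubcategory (fun X : C => size X < κ), F.Full ∧ F.Faithful

/-! ### Subcategories -/

/-- A (not necessarily full) subcategory of a category: a class of objects and classes
of morphisms, closed under identities and composition. -/
structure Subcat (C : Type (u + 1)) [Category.{u} C] : Type (u + 1) where
  objs : Set C
  homs : ∀ X Y : C, Set (X ⟶ Y)
  id_mem : ∀ X, X ∈ objs → 𝟙 X ∈ homs X X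
  comp_mem : ∀ (X Y Z : C) (f : X ⟶ Y) (g : Y ⟶ Z),
    f ∈ homs X Y → g ∈ homs Y Z → f ≫ g ∈ homs X Z

/-- The category determined by a subcategory. -/
abbrev Subcat.cat {C : Type (u + 1)} [Category.{u} C] (S : Subcat C) : Type (u + 1) :=
  {X : C // X ∈ S.objs}

instance Subcat.catCategory {C : Type (u + 1)} [Category.{u} C] (S : Subcat C) :
    Category.{u} S.cat where
  Hom X Y := {f : X.1 ⟶ Y.1 // f ∈ S.homs X.1 Y.1}
  id X := ⟨𝟙 X.1, S.id_mem X.1 X.2⟩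
  comp f g := ⟨f.1 ≫ g.1, S.comp_mem _ _ _ _ _ f.2 g.2⟩
  id_comp f := Subtype.ext (Category.id_comp f.1)
  comp_id f := Subtype.ext (Category.comp_id f.1)
  assoc f g h := Subtype.ext (Category.assoc f.1 g.1 h.1)

/-- The full subcategory of `Str(L)` on a class of structures. -/
abbrev fullStrCat {L : RelLang.{u}} (T : Set (RelStr L)) : Type (u + 1) :=
  ObjectProperty.FullSubcategory (fun M : RelStr L => M ∈ T)

/-! ### Monotonicity, permutation equivalence, orientations -/

/-- A class of `L`-structures is monotone if it is closed under inverse injective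
homomorphisms. -/
def MonotoneClass {L : RelLang.{u}} (S : Set (RelStr L)) : Prop :=
  ∀ (A B : RelStr L), B ∈ S → ∀ f : A ⟶ B, Function.Injective f.1 → A ∈ S

/-- Two `L`-structures are permutation equivalent if there is a bijection `f` between
them such that the relations of `N` are obtained from those of `M` by applying to each
tuple a permutation of its coordinates (and `f`). -/
def PermEquiv {L : RelLang.{u}} (M N : RelStr L) : Prop :=
  ∃ f : M.carrier ≃ N.carrier, ∀ R : L.Symb,
    ∃ σ : (Fin (L.ar R) → M.carrier) → Equiv.Perm (Fin (L.ar R)),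
      N.rel R = {t' | ∃ t ∈ M.rel R, t' = (⇑f ∘ t) ∘ ⇑(σ t)}

/-- `T` is an orientation of the class `S`: for every `M ∈ S` it contains some structure
permutation equivalent to `M`. -/
def IsOrientation {L : RelLang.{u}} (T S : Set (RelStr L)) : Prop :=
  ∀ M ∈ S, ∃ N ∈ T, PermEquiv M N

/-! ### Graphs (as binary structures), digraph category -/

/-- A graph: a vertex type with a binary edge relation (loops and antiparallel edges
allowed). -/
structure DGraph : Type (u + 1) where
  V : Type u
  E : Set (V × V)

/-- Graph homomorphisms map edges to edges. -/
def IsGraphHom (G H : DGraph.{u}) (f : G.V → H.V) : Prop :=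
  ∀ p ∈ G.E, (f p.1, f p.2) ∈ H.E

/-- The category of graphs. -/
instance dgraphCategory : Category DGraph.{u} where
  Hom G H := {f : G.V → H.V // IsGraphHom G H f}
  id G := ⟨id, fun _ hp => hp⟩
  comp f g := ⟨g.1 ∘ f.1, fun p hp => g.2 _ (f.2 p hp)⟩
  id_comp f := Subtype.ext rfl
  comp_id f := Subtype.ext rfl
  assoc f g h := Subtype.ext rfl

/-- A relation is well-founded in the sense of the paper: every nonempty subset `S`
contains an element `s` such that no `p ∈ S` is `R`-below `s`. -/
def WFRel {X : Type u} (r : X → X → Prop) : Prop :=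
  ∀ S : Set X, S.Nonempty → ∃ s ∈ S, ∀ p ∈ S, ¬ r p s

/-- A graph is well-founded if its edge relation is well-founded. -/
def DGraph.WF (G : DGraph.{u}) : Prop := WFRel (fun p s => (p, s) ∈ G.E)

/-- A graph has no isolated vertices. -/
def DGraph.noIsolated (G : DGraph.{u}) : Prop :=
  ∀ x : G.V, ∃ y : G.V, (x, y) ∈ G.E ∨ (y, x) ∈ G.E

/-- Isomorphism of graphs. -/
structure DGraphIso (G H : DGraph.{u}) where
  toEquiv : G.V ≃ H.V
  mem_iff : ∀ p : G.V × G.V, p ∈ G.E ↔ (toEquiv p.1, toEquiv p.2) ∈ H.E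

/-- `G` is a directed graph: its edge relation is irreflexive and antisymmetric. -/
def DGraph.IsDirectedGraph (G : DGraph.{u}) : Prop :=
  (∀ x : G.V, (x, x) ∉ G.E) ∧ ∀ x y : G.V, (x, y) ∈ G.E → (y, x) ∉ G.E

/-- A directed graph path from `a` to `b`: the vertices are exactly `q 0, …, q n`
(pairwise distinct, with `q 0 = a`, `q n = b`) and the edges are exactly the
consecutive pairs. -/
def DGraph.IsDirPath (G : DGraph.{u}) (a b : G.V) : Prop :=
  ∃ (n : ℕ) (q : Fin (n + 1) → G.V), Function.Injective q ∧
    q 0 = a ∧ q (Fin.last n) = b ∧ (∀ v : G.V, ∃ i, q i = v) ∧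
    (∀ p : G.V × G.V, p ∈ G.E ↔ ∃ i : Fin n, p = (q i.castSucc, q i.succ))

/-- The directed `r`-subdivision of a graph: every edge `(u, v)` is replaced by a
directed path of length `r + 1` from `u` to `v`, with `r` new subdivision points. -/
def DGraph.subdiv (H : DGraph.{u}) (r : ℕ) : DGraph.{u} where
  V := H.V ⊕ (↥H.E × Fin r)
  E := {p | (∃ e : ↥H.E, r = 0 ∧ p = (Sum.inl e.1.1, Sum.inl e.1.2)) ∨
    (∃ (e : ↥H.E) (h : 0 < r), p = (Sum.inl e.1.1, Sum.inr (e, ⟨0, h⟩))) ∨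
    (∃ (e : ↥H.E) (i : Fin r) (h : (i : ℕ) + 1 < r),
      p = (Sum.inr (e, i), Sum.inr (e, ⟨(i : ℕ) + 1, h⟩))) ∨
    (∃ (e : ↥H.E) (h : 0 < r), p = (Sum.inr (e, ⟨r - 1, by omega⟩), Sum.inl e.1.2))}

/-! ### Gadgets and the star construction -/

/-- An `L`-gadget: an `L`-structure with two distinguished distinct points `a`, `b` and
pairwise disjoint subsets `A`, `B`, `P`, none containing `a` or `b`. -/
structure Gadget (L : RelLang.{u}) : Type (u + 1) where
  M : RelStr L
  a : M.carrier
  b : M.carrier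
  A : Set M.carrier
  B : Set M.carrier
  P : Set M.carrier
  a_ne_b : a ≠ b
  disjAB : Disjoint A B
  disjAP : Disjoint A P
  disjBP : Disjoint B P
  a_not : a ∉ A ∪ B ∪ P
  b_not : b ∉ A ∪ B ∪ P

/-- The "core" of a gadget: the complement of `{a, b} ∪ A ∪ B ∪ P`. -/
def Gadget.core {L : RelLang.{u}} (Gd : Gadget L) : Set Gd.M.carrier :=
  ({Gd.a, Gd.b} ∪ Gd.A ∪ Gd.B ∪ Gd.P)ᶜ

/-- The underlying set of `G ⋆ M`:
`G ⊔ (π₀[E] × A) ⊔ (π₁[E] × B) ⊔ (E × (M ∖ ({a,b} ∪ A ∪ B ∪ P))) ⊔ P`. -/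
abbrev StarCarrier (G : DGraph.{u}) {L : RelLang.{u}} (Gd : Gadget L) : Type u :=
  G.V ⊕ (↥(Prod.fst '' G.E) × ↥Gd.A) ⊕ (↥(Prod.snd '' G.E) × ↥Gd.B) ⊕
    (↥G.E × ↥Gd.core) ⊕ ↥Gd.P

open Classical in
/-- The canonical map `φ^{G,M}_{(u,v)} : M → G ⋆ M` associated with an edge `(u, v)`. -/
noncomputable def phi {L : RelLang.{u}} (Gd : Gadget L) (G : DGraph.{u}) {u v : G.V}
    (he : (u, v) ∈ G.E) (x : Gd.M.carrier) : StarCarrier G Gd :=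
  if hx : x = Gd.a then Sum.inl u
  else if hx' : x = Gd.b then Sum.inl v
  else if hP : x ∈ Gd.P then Sum.inr (Sum.inr (Sum.inr (Sum.inr ⟨x, hP⟩)))
  else if hA : x ∈ Gd.A then
    Sum.inr (Sum.inl (⟨⟨u, ⟨(u, v), he, rfl⟩⟩, ⟨x, hA⟩⟩))
  else if hB : x ∈ Gd.B then
    Sum.inr (Sum.inr (Sum.inl (⟨⟨v, ⟨(u, v), he, rfl⟩⟩, ⟨x, hB⟩⟩)))
  else Sum.inr (Sum.inr (Sum.inr (Sum.inl (⟨⟨(u, v), he⟩, ⟨x, by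
    simp only [Gadget.core, Set.mem_compl_iff, Set.mem_union, Set.mem_insert_iff,
      Set.mem_singleton_iff]
    push_neg
    exact ⟨⟨⟨⟨hx, hx'⟩, hA⟩, hB⟩, hP⟩⟩⟩))))

/-- The `L`-structure `G ⋆ M`: its relations are exactly the images of the relations of
the gadget under the maps `φ_{(u,v)}`, `(u, v) ∈ E(G)`. -/
def starStr (G : DGraph.{u}) {L : RelLang.{u}} (Gd : Gadget L) : RelStr L where
  carrier := StarCarrier G Gd
  rel R := {t | ∃ (u v : G.V) (he : (u, v) ∈ G.E),
    ∃ s ∈ Gd.M.rel R, t = phi Gd G he ∘ s}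

/-- Homomorphisms of `L`-gadgets. -/
structure GadgetHom {L : RelLang.{u}} (Gd₁ Gd₂ : Gadget L) : Type u where
  f : Gd₁.M.carrier → Gd₂.M.carrier
  isHom : IsRelHom Gd₁.M Gd₂.M f
  map_a : f Gd₁.a = Gd₂.a
  map_b : f Gd₁.b = Gd₂.b
  mapsA : ∀ x ∈ Gd₁.A, f x ∈ Gd₂.A
  mapsB : ∀ x ∈ Gd₁.B, f x ∈ Gd₂.B
  mapsP : ∀ x ∈ Gd₁.P, f x ∈ Gd₂.P

/-- The identity gadget homomorphism. -/
def GadgetHom.id {L : RelLang.{u}} (Gd : Gadget L) : GadgetHom Gd Gd where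
  f := _root_.id
  isHom := fun _ _ ht => ht
  map_a := rfl
  map_b := rfl
  mapsA := fun _ hx => hx
  mapsB := fun _ hx => hx
  mapsP := fun _ hx => hx

/-- Composition of gadget homomorphisms. -/
def GadgetHom.comp {L : RelLang.{u}} {Gd₁ Gd₂ Gd₃ : Gadget L}
    (ρ : GadgetHom Gd₁ Gd₂) (τ : GadgetHom Gd₂ Gd₃) : GadgetHom Gd₁ Gd₃ where
  f := τ.f ∘ ρ.f
  isHom := fun R t ht => τ.isHom R (ρ.f ∘ t) (ρ.isHom R t ht)
  map_a := by simp [Function.comp, ρ.map_a, τ.map_a]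
  map_b := by simp [Function.comp, ρ.map_b, τ.map_b]
  mapsA := fun x hx => τ.mapsA _ (ρ.mapsA x hx)
  mapsB := fun x hx => τ.mapsB _ (ρ.mapsB x hx)
  mapsP := fun x hx => τ.mapsP _ (ρ.mapsP x hx)

/-- The map `f ⋆ ρ : G ⋆ M → H ⋆ N` induced by a graph homomorphism `f : G → H` and a
gadget homomorphism `ρ : M → N`. -/
noncomputable def starHomMap {L : RelLang.{u}} {Gd₁ Gd₂ : Gadget L} {G H : DGraph.{u}}
    (f : G ⟶ H) (ρ : GadgetHom Gd₁ Gd₂) : StarCarrier G Gd₁ → StarCarrier H Gd₂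
  | Sum.inl w => Sum.inl (f.1 w)
  | Sum.inr (Sum.inl (⟨w, hw⟩, ⟨x, hx⟩)) =>
      Sum.inr (Sum.inl (⟨⟨f.1 w, by
        obtain ⟨p, hp, h⟩ := hw
        exact ⟨(f.1 p.1, f.1 p.2), f.2 p hp, by rw [← h]⟩⟩, ⟨ρ.f x, ρ.mapsA x hx⟩⟩))
  | Sum.inr (Sum.inr (Sum.inl (⟨w, hw⟩, ⟨x, hx⟩))) =>
      Sum.inr (Sum.inr (Sum.inl (⟨⟨f.1 w, by
        obtain ⟨p, hp, h⟩ := hw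
        exact ⟨(f.1 p.1, f.1 p.2), f.2 p hp, by rw [← h]⟩⟩, ⟨ρ.f x, ρ.mapsB x hx⟩⟩)))
  | Sum.inr (Sum.inr (Sum.inr (Sum.inl (⟨e, he⟩, ⟨x, _⟩)))) =>
      phi Gd₂ H (f.2 e he) (ρ.f x)
  | Sum.inr (Sum.inr (Sum.inr (Sum.inr ⟨x, hx⟩))) =>
      Sum.inr (Sum.inr (Sum.inr (Sum.inr ⟨ρ.f x, ρ.mapsP x hx⟩)))

/-- The map `f ⋆ M` induced by a graph homomorphism (with the identity on the gadget). -/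
noncomputable def starMapG {L : RelLang.{u}} (Gd : Gadget L) {G H : DGraph.{u}}
    (f : G ⟶ H) : StarCarrier G Gd → StarCarrier H Gd :=
  starHomMap f (GadgetHom.id Gd)

/-! ### Directed structures, arc graphs, systems -/

/-- The set `V_M` of elements appearing in the first two coordinates of a tuple of some
relation of `M`. -/
def VSet {L : RelLang.{u}} (M : RelStr L) : Set M.carrier :=
  {x | ∃ (R : L.Symb) (t : Fin (L.ar R) → M.carrier), t ∈ M.rel R ∧
    ((∃ h : 0 < L.ar R, t ⟨0, h⟩ = x) ∨ (∃ h : 1 < L.ar R, t ⟨1, h⟩ = x))}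

/-- The arc edges of `M`: pairs `(π₀ t, π₁ t)` for tuples `t` of relations of `M`. -/
def arcEdges {L : RelLang.{u}} (M : RelStr L) : Set (M.carrier × M.carrier) :=
  {p | ∃ (R : L.Symb) (t : Fin (L.ar R) → M.carrier) (h : 1 < L.ar R),
    t ∈ M.rel R ∧ t ⟨0, by omega⟩ = p.1 ∧ t ⟨1, h⟩ = p.2}

/-- An `L`-structure is directed: no tuple has equal first two coordinates, and for any
(ordered or swapped) pair of endpoints there is at most one relation symbol and one
tuple realising it. -/
def DirectedStr {L : RelLang.{u}} (M : RelStr L) : Prop :=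
  (∀ (R : L.Symb) (t : Fin (L.ar R) → M.carrier), t ∈ M.rel R →
    ∀ h : 1 < L.ar R, t ⟨0, by omega⟩ ≠ t ⟨1, h⟩) ∧
  (∀ (R₁ R₂ : L.Symb) (t₁ : Fin (L.ar R₁) → M.carrier) (t₂ : Fin (L.ar R₂) → M.carrier),
    t₁ ∈ M.rel R₁ → t₂ ∈ M.rel R₂ → ∀ (h₁ : 1 < L.ar R₁) (h₂ : 1 < L.ar R₂),
    ((t₁ ⟨0, by omega⟩ = t₂ ⟨0, by omega⟩ ∧ t₁ ⟨1, h₁⟩ = t₂ ⟨1, h₂⟩) ∨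
     (t₁ ⟨0, by omega⟩ = t₂ ⟨1, h₂⟩ ∧ t₁ ⟨1, h₁⟩ = t₂ ⟨0, by omega⟩)) →
    R₁ = R₂ ∧ HEq t₁ t₂)

/-- The arc graph of a directed `L`-structure. -/
def arcGraph {L : RelLang.{u}} (M : RelStr L) : DGraph.{u} where
  V := ↥(VSet M)
  E := {p | ((p.1 : M.carrier), (p.2 : M.carrier)) ∈ arcEdges M}

/-- An `L`-system: a directed `L`-gadget whose distinguished points lie in `V_M` and
such that `V_M` avoids `A ∪ B ∪ P`. -/
structure IsSystem {L : RelLang.{u}} (Gd : Gadget L) : Prop where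
  directed : DirectedStr Gd.M
  a_mem : Gd.a ∈ VSet Gd.M
  b_mem : Gd.b ∈ VSet Gd.M
  arc_disj : ∀ x ∈ VSet Gd.M, x ∉ Gd.A ∪ Gd.B ∪ Gd.P

/-! ### The star construction for simple graph gadgets -/

/-- The vertex set of `G ⋆ N` for a simple graph gadget `(N, a, b)`. -/
abbrev GStarVert (G N : DGraph.{u}) (a b : N.V) : Type u :=
  G.V ⊕ (↥G.E × {x : N.V // x ≠ a ∧ x ≠ b})

open Classical in
/-- The map `φ^{N,G}_{(u,v)} : N → G ⋆ N` for a simple graph gadget. -/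
noncomputable def gphi (G N : DGraph.{u}) (a b : N.V) {u v : G.V}
    (he : (u, v) ∈ G.E) (x : N.V) : GStarVert G N a b :=
  if hx : x = a then Sum.inl u
  else if hx' : x = b then Sum.inl v
  else Sum.inr (⟨(u, v), he⟩, ⟨x, hx, hx'⟩)

/-- The graph `G ⋆ N` for a simple graph gadget `(N, a, b)`. -/
def gstar (G N : DGraph.{u}) (a b : N.V) : DGraph.{u} where
  V := GStarVert G N a b
  E := {p | ∃ (x y : G.V) (he : (x, y) ∈ G.E), ∃ q ∈ N.E,
    p = (gphi G N a b he q.1, gphi G N a b he q.2)}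

/-- The gadget `H ⊛ M` obtained by endowing `H ⋆ M` with the gadget structure inherited
from the simple graph gadget `(H, s, t)` and the `L`-gadget `M`. -/
def hstar (H : DGraph.{u}) (s t : H.V) (hst : s ≠ t) (hs : s ∈ Prod.fst '' H.E)
    (ht : t ∈ Prod.snd '' H.E) {L : RelLang.{u}} (Gd : Gadget L) : Gadget L where
  M := starStr H Gd
  a := Sum.inl s
  b := Sum.inl t
  A := {x | ∃ a0 : ↥Gd.A, x = Sum.inr (Sum.inl (⟨⟨s, hs⟩, a0⟩))}
  B := {x | ∃ b0 : ↥Gd.B, x = Sum.inr (Sum.inr (Sum.inl (⟨⟨t, ht⟩, b0⟩)))}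
  P := {x | ∃ p0 : ↥Gd.P, x = Sum.inr (Sum.inr (Sum.inr (Sum.inr p0)))}
  a_ne_b := fun h => hst (Sum.inl.inj h)
  disjAB := by
    rw [Set.disjoint_left]
    rintro x ⟨a0, rfl⟩ ⟨b0, hb⟩
    injection hb with h
    injection h
  disjAP := by
    rw [Set.disjoint_left]
    rintro x ⟨a0, rfl⟩ ⟨p0, hp⟩
    injection hp with h
    injection h
  disjBP := by
    rw [Set.disjoint_left]
    rintro x ⟨b0, rfl⟩ ⟨p0, hp⟩
    injection hp with h
    injection h with h2
    injection h2
  a_not := by rintro ((⟨a0, h⟩ | ⟨b0, h⟩) | ⟨p0, h⟩) <;> injection h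
  b_not := by rintro ((⟨a0, h⟩ | ⟨b0, h⟩) | ⟨p0, h⟩) <;> injection h

/-! ### L-paths -/

/-- `(M, p)` is an `L`-path of length `n`. -/
def IsLPath {L : RelLang.{u}} (M : RelStr L) (n : ℕ) (p : Fin (n + 1) → M.carrier) :
    Prop :=
  Function.Injective p ∧
  ∃ (R : Fin n → L.Symb) (e : ∀ i : Fin n, Fin (L.ar (R i)) → M.carrier),
    (∀ i, e i ∈ M.rel (R i)) ∧
    (∀ x : M.carrier, ∃ i, x ∈ Set.range (e i)) ∧
    (∀ i : Fin n, p i.castSucc ∈ Set.range (e i) ∧ p i.succ ∈ Set.range (e i)) ∧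
    (∀ h : 1 < n, p 0 ∉ Set.range (e ⟨1, h⟩) ∧
      p (Fin.last n) ∉ Set.range (e ⟨n - 2, by omega⟩)) ∧
    (∀ (R' : L.Symb) (t : Fin (L.ar R') → M.carrier), t ∈ M.rel R' →
      ∃ i : Fin n, R' = R i ∧ HEq t (e i)) ∧
    (∀ (i : Fin n) (R' : L.Symb) (h : L.ar R' = L.ar (R i)),
      (fun k : Fin (L.ar R') => e i (Fin.cast h k)) ∈ M.rel R' → R' = R i)

/-! ### Induced substructures (for components) -/

/-- The substructure of `M` on a subset `s`: its relations are the tuples of relations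
of `M` all of whose entries lie in `s`. -/
def substruct {L : RelLang.{u}} (M : RelStr L) (s : Set M.carrier) : RelStr L where
  carrier := ↥s
  rel R := {t | (fun k => (t k : M.carrier)) ∈ M.rel R}

/-! ### The category of cardinals -/

/-- The category of cardinals `< κ` viewed as ordered sets, with order-preserving
(i.e. `∈`-preserving, strictly monotone) maps. -/
def CardLt (κ : Cardinal.{u}) : Type (u + 1) := {lam : Cardinal.{u} // lam < κ}

instance cardLtCategory (κ : Cardinal.{u}) : Category.{u} (CardLt κ) where
  Hom a b := {f : a.1.ord.ToType → b.1.ord.ToType // StrictMono f}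
  id a := ⟨id, strictMono_id⟩
  comp f g := ⟨g.1 ∘ f.1, g.2.comp f.2⟩
  id_comp f := Subtype.ext rfl
  comp_id f := Subtype.ext rfl
  assoc f g h := Subtype.ext rfl

/-! The arc `(φ t₀, φ t₁)` of a tuple of `G ⋆ M` determines the edge `(u, v)` it came
from: since `t₀, t₁ ∈ V_M` avoid `A ∪ B ∪ P`, each of them is `α`, `β` or a core point,
and a core point is tagged by its edge; if neither is, then `{t₀, t₁} = {α, β}` is sent
to `{u, v}`, whose orientation is fixed by antisymmetry of `G`. For a fixed edge `φ` is
injective, so the directedness of `M` transfers to `G ⋆ M`. -/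

namespace DGraph.IsDirectedGraph

variable {G : DGraph.{u}}

lemma ne_of_mem (hG : G.IsDirectedGraph) {u v : G.V} (he : (u, v) ∈ G.E) : u ≠ v :=
  fun h => hG.1 u (h ▸ he)

lemma eq_of_sym2_eq (hG : G.IsDirectedGraph) {u₁ v₁ u₂ v₂ : G.V} (he₁ : (u₁, v₁) ∈ G.E)
    (he₂ : (u₂, v₂) ∈ G.E) (h : s(u₁, v₁) = s(u₂, v₂)) : (u₁, v₁) = (u₂, v₂) := by
  rcases Sym2.eq_iff.1 h with ⟨rfl, rfl⟩ | ⟨rfl, rfl⟩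
  · rfl
  · exact absurd he₁ (hG.2 _ _ he₂)

end DGraph.IsDirectedGraph

lemma mem_VSet_fst {L : RelLang.{u}} {M : RelStr L} {R : L.Symb}
    {t : Fin (L.ar R) → M.carrier} (ht : t ∈ M.rel R) (h : 1 < L.ar R) :
    t ⟨0, by omega⟩ ∈ VSet M := ⟨R, t, ht, Or.inl ⟨by omega, rfl⟩⟩

lemma mem_VSet_snd {L : RelLang.{u}} {M : RelStr L} {R : L.Symb}
    {t : Fin (L.ar R) → M.carrier} (ht : t ∈ M.rel R) (h : 1 < L.ar R) :
    t ⟨1, h⟩ ∈ VSet M := ⟨R, t, ht, Or.inr ⟨h, rfl⟩⟩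

lemma Gadget.eq_a_or_eq_b_or_mem_core {L : RelLang.{u}} (Gd : Gadget L) {x : Gd.M.carrier}
    (hx : x ∉ Gd.A ∪ Gd.B ∪ Gd.P) : x = Gd.a ∨ x = Gd.b ∨ x ∈ Gd.core := by
  simp only [Gadget.core, Set.mem_compl_iff, Set.mem_union, Set.mem_insert_iff,
    Set.mem_singleton_iff] at hx ⊢
  tauto

section phi

variable {L : RelLang.{u}} (Gd : Gadget L) (G : DGraph.{u})

lemma phi_a {u v : G.V} (he : (u, v) ∈ G.E) : phi Gd G he Gd.a = Sum.inl u := by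
  simp [phi]

lemma phi_b {u v : G.V} (he : (u, v) ∈ G.E) : phi Gd G he Gd.b = Sum.inl v := by
  simp [phi, Gd.a_ne_b.symm]

lemma phi_of_mem_core {u v : G.V} (he : (u, v) ∈ G.E) {x : Gd.M.carrier}
    (hx : x ∈ Gd.core) :
    phi Gd G he x = Sum.inr (Sum.inr (Sum.inr (Sum.inl (⟨⟨(u, v), he⟩, ⟨x, hx⟩⟩)))) := by
  simp only [Gadget.core, Set.mem_compl_iff, Set.mem_union, Set.mem_insert_iff,
    Set.mem_singleton_iff, not_or] at hx
  simp [phi, hx]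

lemma phi_injective {u v : G.V} (he : (u, v) ∈ G.E) (huv : u ≠ v) :
    Function.Injective (phi Gd G he) := by
  intro x y h
  unfold phi at h
  split_ifs at h <;> simp_all

variable {Gd G}

lemma edge_eq_of_phi_eq_of_mem_core {u₁ v₁ u₂ v₂ : G.V} {he₁ : (u₁, v₁) ∈ G.E}
    {he₂ : (u₂, v₂) ∈ G.E} {x₁ x₂ : Gd.M.carrier} (hx₁ : x₁ ∈ Gd.core)
    (hx₂ : x₂ ∉ Gd.A ∪ Gd.B ∪ Gd.P) (h : phi Gd G he₁ x₁ = phi Gd G he₂ x₂) :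
    (u₁, v₁) = (u₂, v₂) := by
  rw [phi_of_mem_core Gd G he₁ hx₁] at h
  rcases Gd.eq_a_or_eq_b_or_mem_core hx₂ with rfl | rfl | hc₂
  · simp [phi_a] at h
  · simp [phi_b] at h
  · simp only [phi_of_mem_core Gd G he₂ hc₂, Sum.inr.injEq, Sum.inl.injEq,
      Prod.mk.injEq, Subtype.mk.injEq] at h
    exact Prod.ext h.1.1 h.1.2

lemma edge_eq_of_phi_mem_of_mem_core {u₁ v₁ u₂ v₂ : G.V} {he₁ : (u₁, v₁) ∈ G.E}
    {he₂ : (u₂, v₂) ∈ G.E} {x₁ x₂ y₂ : Gd.M.carrier} (hx₁ : x₁ ∈ Gd.core)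
    (hx₂ : x₂ ∉ Gd.A ∪ Gd.B ∪ Gd.P) (hy₂ : y₂ ∉ Gd.A ∪ Gd.B ∪ Gd.P)
    (h : phi Gd G he₁ x₁ ∈ s(phi Gd G he₂ x₂, phi Gd G he₂ y₂)) :
    (u₁, v₁) = (u₂, v₂) := by
  rcases Sym2.mem_iff.1 h with h | h
  · exact edge_eq_of_phi_eq_of_mem_core hx₁ hx₂ h
  · exact edge_eq_of_phi_eq_of_mem_core hx₁ hy₂ h

lemma sym2_phi_eq_of_not_mem_core {u v : G.V} (he : (u, v) ∈ G.E) {x y : Gd.M.carrier}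
    (hxy : x ≠ y) (hx : x ∉ Gd.A ∪ Gd.B ∪ Gd.P) (hy : y ∉ Gd.A ∪ Gd.B ∪ Gd.P)
    (hcx : x ∉ Gd.core) (hcy : y ∉ Gd.core) :
    s(phi Gd G he x, phi Gd G he y) = s(Sum.inl u, Sum.inl v) := by
  rcases Gd.eq_a_or_eq_b_or_mem_core hx with rfl | rfl | hcx' <;>
  rcases Gd.eq_a_or_eq_b_or_mem_core hy with rfl | rfl | hcy' <;>
    simp_all [phi_a, phi_b, Sym2.eq_swap]

lemma edge_eq_of_sym2_phi_eq (hG : G.IsDirectedGraph) {u₁ v₁ u₂ v₂ : G.V}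
    {he₁ : (u₁, v₁) ∈ G.E} {he₂ : (u₂, v₂) ∈ G.E} {x₁ y₁ x₂ y₂ : Gd.M.carrier}
    (hxy₁ : x₁ ≠ y₁) (hxy₂ : x₂ ≠ y₂)
    (hx₁ : x₁ ∉ Gd.A ∪ Gd.B ∪ Gd.P) (hy₁ : y₁ ∉ Gd.A ∪ Gd.B ∪ Gd.P)
    (hx₂ : x₂ ∉ Gd.A ∪ Gd.B ∪ Gd.P) (hy₂ : y₂ ∉ Gd.A ∪ Gd.B ∪ Gd.P)
    (h : s(phi Gd G he₁ x₁, phi Gd G he₁ y₁) = s(phi Gd G he₂ x₂, phi Gd G he₂ y₂)) :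
    (u₁, v₁) = (u₂, v₂) := by
  by_cases hc₁ : x₁ ∈ Gd.core ∨ y₁ ∈ Gd.core
  · rcases hc₁ with hc | hc
    · exact edge_eq_of_phi_mem_of_mem_core hc hx₂ hy₂ (h ▸ Sym2.mem_mk_left _ _)
    · exact edge_eq_of_phi_mem_of_mem_core hc hx₂ hy₂ (h ▸ Sym2.mem_mk_right _ _)
  by_cases hc₂ : x₂ ∈ Gd.core ∨ y₂ ∈ Gd.core
  · rcases hc₂ with hc | hc
    · exact (edge_eq_of_phi_mem_of_mem_core hc hx₁ hy₁ (h.symm ▸ Sym2.mem_mk_left _ _)).symm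
    · exact (edge_eq_of_phi_mem_of_mem_core hc hx₁ hy₁ (h.symm ▸ Sym2.mem_mk_right _ _)).symm
  push Not at hc₁ hc₂
  rw [sym2_phi_eq_of_not_mem_core he₁ hxy₁ hx₁ hy₁ hc₁.1 hc₁.2,
    sym2_phi_eq_of_not_mem_core he₂ hxy₂ hx₂ hy₂ hc₂.1 hc₂.2] at h
  exact hG.eq_of_sym2_eq he₁ he₂ (Sym2.map.injective Sum.inl_injective h)

end phi

/-- If `G` is a directed graph and `(M, α, β, A, B, P)` is an
`L`-system, then the `L`-structure `G ⋆ M` is directed. -/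
theorem star_directed {L : RelLang.{u}} (G : DGraph.{u}) (hG : G.IsDirectedGraph)
    (Gd : Gadget L) (hsys : IsSystem Gd) : DirectedStr (starStr G Gd) := by
  have hM := hsys.directed
  constructor
  · rintro R t ⟨u, v, he, s, hs, rfl⟩ h hc
    exact hM.1 R s hs h (phi_injective Gd G he (hG.ne_of_mem he) hc)
  · rintro R₁ R₂ t₁ t₂ ⟨u₁, v₁, he₁, s₁, hs₁, rfl⟩ ⟨u₂, v₂, he₂, s₂, hs₂, rfl⟩ h₁ h₂ hm
    replace hm := Sym2.eq_iff.2 hm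
    have hedge := edge_eq_of_sym2_phi_eq hG (hM.1 R₁ s₁ hs₁ h₁) (hM.1 R₂ s₂ hs₂ h₂)
      (hsys.arc_disj _ (mem_VSet_fst hs₁ h₁)) (hsys.arc_disj _ (mem_VSet_snd hs₁ h₁))
      (hsys.arc_disj _ (mem_VSet_fst hs₂ h₂)) (hsys.arc_disj _ (mem_VSet_snd hs₂ h₂)) hm
    obtain ⟨rfl, rfl⟩ := Prod.mk.inj hedge
    have hs : s(s₁ ⟨0, by omega⟩, s₁ ⟨1, h₁⟩) = s(s₂ ⟨0, by omega⟩, s₂ ⟨1, h₂⟩) :=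
      Sym2.map.injective (phi_injective Gd G he₁ (hG.ne_of_mem he₁)) hm
    obtain ⟨rfl, hheq⟩ := hM.2 R₁ R₂ s₁ s₂ hs₁ hs₂ h₁ h₂ (Sym2.eq_iff.1 hs)
    cases eq_of_heq hheq
    exact ⟨rfl, HEq.rfl⟩
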